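/- Let M be a unitary projective co-representation of G of dimension n. For any n×n complex matrix Q₀, define q_r = Σ_{g∈G} M(g)·Q₀^{σ(g)}·M(g)† and Q_r = q_r + q_r†. Then Q_r is Hermitian and satisfies M(g)·Q_r^{σ(g)} = Q_r·M(g) for all g ∈ G, so each eigenspace of Q_r is an invariant subspace. Moreover, there exists a choice of Q₀ such that the eigenspaces of the resulting Q_r are pairwise orthogonal invariant subspaces summing to ℂⁿ on each of which the restricted co-representation is irreducible. -/

import Mathlib

open Matrix Complex BigOperators

noncomputable section

def mconj {ι : Type*} (u : ℤˣ) (X : Matrix ι ι ℂ) : Matrix ι ι ℂ :=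
  if u = 1 then X else X.map (starRingEnd ℂ)

def vconj {ι : Type*} (u : ℤˣ) (v : ι → ℂ) : ι → ℂ :=
  if u = 1 then v else star v

structure IsCoRep {G : Type*} [Group G] {ι : Type*} [Fintype ι] [DecidableEq ι] (s : G →* ℤˣ)
    (M : G → Matrix ι ι ℂ) (ω : G → G → ℂ) : Prop where
  isUnit : ∀ g, IsUnit (M g)
  omega_norm : ∀ g1 g2, ‖ω g1 g2‖ = 1
  mul_eq : ∀ g1 g2, M g1 * mconj (s g1) (M g2) = ω g1 g2 • M (g1 * g2)

structure IsUnitaryCoRep {G : Type*} [Group G] {ι : Type*} [Fintype ι] [DecidableEq ι]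
    (s : G →* ℤˣ) (M : G → Matrix ι ι ℂ) (ω : G → G → ℂ) extends IsCoRep s M ω : Prop where
  unitary : ∀ g, M g ∈ Matrix.unitaryGroup ι ℂ

def rho {G : Type*} [Group G] {ι : Type*} [Fintype ι] (s : G →* ℤˣ) (M : G → Matrix ι ι ℂ)
    (g : G) (v : ι → ℂ) : ι → ℂ :=
  (M g).mulVec (vconj (s g) v)

def InvariantSub {G : Type*} [Group G] {ι : Type*} [Fintype ι] (s : G →* ℤˣ)
    (M : G → Matrix ι ι ℂ) (W : Submodule ℂ (ι → ℂ)) : Prop :=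
  ∀ g : G, ∀ v ∈ W, rho s M g v ∈ W

/-- The eigenspace `ker(Q - λI)` of a matrix `Q`, as a submodule of `ι → ℂ`. -/
def eigSpace {ι : Type*} [Fintype ι] (Q : Matrix ι ι ℂ) (lam : ℂ) :
    Submodule ℂ (ι → ℂ) where
  carrier := {v | Q.mulVec v = lam • v}
  add_mem' := by
    intro a b ha hb
    simp only [Set.mem_setOf_eq] at *
    simp [Matrix.mulVec_add, ha, hb, smul_add]
  zero_mem' := by simp [Matrix.mulVec_zero]
  smul_mem' := by
    intro c v hv
    simp only [Set.mem_setOf_eq] at *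
    rw [Matrix.mulVec_smul, hv, smul_comm]


/-!
Twisted conjugation `X ↦ M g * X^{σ(g)} * (M g)ᴴ` is an action of `G` on matrices (the factor
system drops out because `|ω| = 1`), so the group average `q_r` of any `Q₀`, and with it
`Q_r = q_r + q_rᴴ`, is a fixed point. By unitarity the fixed points are exactly the matrices
intertwining every `ρ(g)`, and a Hermitian intertwiner has real eigenvalues, so even a
conjugate-linear `ρ(g)` preserves its eigenspaces.

Each `ρ(g)` preserves orthogonality and maps an invariant subspace onto itself, so orthogonal
complements of invariant subspaces are invariant. Splitting off a minimal nonzero invariant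
subspace again and again decomposes `ℂⁿ` into pairwise orthogonal irreducible invariant
subspaces `W_i`. With distinct real weights, `Q = ∑ i, c_i • P_{W_i}` is a Hermitian intertwiner
whose eigenspaces are exactly the `W_i`, and `Q₀ = Q / (2|G|)` reproduces `Q_r = Q`.
-/

section Conj

variable {ι : Type*}

lemma vconj_vconj (u : ℤˣ) (v : ι → ℂ) : vconj u (vconj u v) = v := by
  unfold vconj; split <;> simp

lemma vconj_add (u : ℤˣ) (v w : ι → ℂ) : vconj u (v + w) = vconj u v + vconj u w := by
  unfold vconj; split <;> simp

lemma vconj_smul_of_star_eq (u : ℤˣ) {c : ℂ} (hc : star c = c) (v : ι → ℂ) :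
    vconj u (c • v) = c • vconj u v := by
  unfold vconj; split <;> simp [star_smul, hc]

lemma star_vconj_dotProduct_vconj_eq_zero [Fintype ι] (u : ℤˣ) {v w : ι → ℂ} (h : star v ⬝ᵥ w = 0) :
    star (vconj u v) ⬝ᵥ vconj u w = 0 := by
  unfold vconj; split
  · exact h
  · simpa [dotProduct, mul_comm] using congrArg star h

lemma mconj_mulVec_vconj [Fintype ι] (u : ℤˣ) (X : Matrix ι ι ℂ) (v : ι → ℂ) :
    mconj u X *ᵥ vconj u v = vconj u (X *ᵥ v) := by
  unfold mconj vconj; split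
  · rfl
  · ext i; simp [mulVec, dotProduct]

lemma mconj_add (u : ℤˣ) (X Y : Matrix ι ι ℂ) : mconj u (X + Y) = mconj u X + mconj u Y := by
  unfold mconj; split <;> simp [Matrix.map_add]

lemma mconj_smul_of_star_eq (u : ℤˣ) {c : ℂ} (hc : star c = c) (X : Matrix ι ι ℂ) :
    mconj u (c • X) = c • mconj u X := by
  unfold mconj; split
  · rfl
  · ext i j; simp [show (starRingEnd ℂ) c = c from hc]

lemma mconj_mul [Fintype ι] (u : ℤˣ) (X Y : Matrix ι ι ℂ) :
    mconj u (X * Y) = mconj u X * mconj u Y := by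
  unfold mconj; split
  · rfl
  · exact Matrix.map_mul

lemma mconj_mconj (u w : ℤˣ) (X : Matrix ι ι ℂ) : mconj u (mconj w X) = mconj (u * w) X := by
  rcases Int.units_eq_one_or u with rfl | rfl <;> rcases Int.units_eq_one_or w with rfl | rfl <;>
    simp [mconj, Matrix.map_map, Function.comp_def]

lemma mconj_conjTranspose (u : ℤˣ) (X : Matrix ι ι ℂ) : mconj u Xᴴ = (mconj u X)ᴴ := by
  unfold mconj; split
  · rfl
  · ext i j; simp

end Conj

section CoRep

variable {G : Type*} [Group G] {ι : Type*} [Fintype ι] {s : G →* ℤˣ} {M : G → Matrix ι ι ℂ}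

lemma rho_add (g : G) (v w : ι → ℂ) : rho s M g (v + w) = rho s M g v + rho s M g w := by
  simp [rho, vconj_add, mulVec_add]

lemma rho_smul_of_star_eq (g : G) {c : ℂ} (hc : star c = c) (v : ι → ℂ) :
    rho s M g (c • v) = c • rho s M g v := by
  simp [rho, vconj_smul_of_star_eq _ hc, mulVec_smul]

lemma mul_mconj_eq_mul_iff_mulVec_rho (g : G) (X : Matrix ι ι ℂ) :
    M g * mconj (s g) X = X * M g ↔ ∀ v, X *ᵥ rho s M g v = rho s M g (X *ᵥ v) := by
  have hl : ∀ v, X *ᵥ rho s M g v = (X * M g) *ᵥ vconj (s g) v := fun v => by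
    rw [rho, mulVec_mulVec]
  have hr : ∀ v, rho s M g (X *ᵥ v) = (M g * mconj (s g) X) *ᵥ vconj (s g) v := fun v => by
    rw [rho, ← mconj_mulVec_vconj, mulVec_mulVec]
  have hinv : Function.Involutive (vconj (ι := ι) (s g)) := vconj_vconj (s g)
  simp only [hl, hr]
  exact ext_iff_mulVec.trans (hinv.surjective.forall.trans (forall_congr' fun _ => eq_comm))

variable [DecidableEq ι] {ω : G → G → ℂ}

namespace IsCoRep

variable (hM : IsCoRep s M ω)
include hM

lemma omega_ne_zero (g h : G) : ω g h ≠ 0 :=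
  norm_ne_zero_iff.mp (by rw [hM.omega_norm]; exact one_ne_zero)

lemma apply_one : M 1 = ω 1 1 • 1 := by
  have h := hM.mul_eq 1 1
  rw [map_one, mul_one, show mconj 1 (M 1) = M 1 from if_pos rfl] at h
  exact (hM.isUnit 1).mul_left_cancel (by rw [h, Matrix.mul_smul, mul_one])

lemma rho_rho_inv (g : G) (v : ι → ℂ) :
    rho s M g (rho s M g⁻¹ v) = (ω g g⁻¹ * ω 1 1) • v := by
  have hs : s g⁻¹ = s g := by rw [map_inv, Int.units_inv_eq_self]
  rw [rho, rho, hs, ← mconj_mulVec_vconj, vconj_vconj, mulVec_mulVec, hM.mul_eq, mul_inv_cancel,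
    hM.apply_one, smul_smul, smul_mulVec, one_mulVec]

lemma exists_rho_eq {W : Submodule ℂ (ι → ℂ)} (hW : InvariantSub s M W) (g : G) {v : ι → ℂ}
    (hv : v ∈ W) : ∃ w ∈ W, rho s M g w = v := by
  have hc : ω g g⁻¹ * ω 1 1 ≠ 0 := mul_ne_zero (hM.omega_ne_zero _ _) (hM.omega_ne_zero _ _)
  refine ⟨rho s M g⁻¹ ((ω g g⁻¹ * ω 1 1)⁻¹ • v), hW _ _ (W.smul_mem _ hv), ?_⟩
  rw [hM.rho_rho_inv, smul_smul, mul_inv_cancel₀ hc, one_smul]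

end IsCoRep

namespace IsUnitaryCoRep

variable (hM : IsUnitaryCoRep s M ω)
include hM

lemma conjTranspose_mul_self (g : G) : (M g)ᴴ * M g = 1 :=
  mem_unitaryGroup_iff'.mp (hM.unitary g)

lemma mul_conjTranspose_self (g : G) : M g * (M g)ᴴ = 1 :=
  mem_unitaryGroup_iff.mp (hM.unitary g)

lemma star_rho_dotProduct_rho_eq_zero (g : G) {v w : ι → ℂ} (h : star v ⬝ᵥ w = 0) :
    star (rho s M g v) ⬝ᵥ rho s M g w = 0 := by
  rw [rho, rho, star_mulVec, dotProduct_mulVec, vecMul_vecMul, hM.conjTranspose_mul_self,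
    vecMul_one]
  exact star_vconj_dotProduct_vconj_eq_zero _ h

end IsUnitaryCoRep

end CoRep

section CoConj

variable {G : Type*} [Group G] {ι : Type*} [Fintype ι] {s : G →* ℤˣ} {M : G → Matrix ι ι ℂ}

variable (s M) in
def coConj (g : G) : Matrix ι ι ℂ →+ Matrix ι ι ℂ where
  toFun X := M g * mconj (s g) X * (M g)ᴴ
  map_zero' := by simp [mconj]
  map_add' X Y := by simp [mconj_add, mul_add, add_mul]

lemma coConj_apply (g : G) (X : Matrix ι ι ℂ) :
    coConj s M g X = M g * mconj (s g) X * (M g)ᴴ := rfl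

lemma coConj_smul_of_star_eq (g : G) {c : ℂ} (hc : star c = c) (X : Matrix ι ι ℂ) :
    coConj s M g (c • X) = c • coConj s M g X := by
  simp [coConj_apply, mconj_smul_of_star_eq _ hc]

lemma coConj_conjTranspose (g : G) (X : Matrix ι ι ℂ) :
    coConj s M g Xᴴ = (coConj s M g X)ᴴ := by
  simp [coConj_apply, mconj_conjTranspose, conjTranspose_mul, mul_assoc]

lemma sum_coConj_smul_add_conjTranspose [Fintype G] {Q : Matrix ι ι ℂ} (hQ : Q.IsHermitian)
    (hfix : ∀ g, coConj s M g Q = Q) :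
    let qr := ∑ g, coConj s M g (((2 * Fintype.card G : ℕ) : ℂ)⁻¹ • Q)
    qr + qrᴴ = Q := by
  set c : ℂ := ((2 * Fintype.card G : ℕ) : ℂ)⁻¹ with hc_def
  have hc : star c = c := by simp [c]
  have hqr : ∑ g, coConj s M g (c • Q) = ((Fintype.card G : ℂ) * c) • Q := by
    simp only [coConj_smul_of_star_eq _ hc, hfix, Finset.sum_const, Finset.card_univ,
      ← Nat.cast_smul_eq_nsmul ℂ, smul_smul]
  have hcard : (Fintype.card G : ℂ) ≠ 0 := Nat.cast_ne_zero.mpr Fintype.card_ne_zero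
  have h2c : (Fintype.card G : ℂ) * c + (Fintype.card G : ℂ) * c = 1 := by
    rw [hc_def]; push_cast; field_simp; ring
  simp only [hqr, conjTranspose_smul, hQ.eq, star_mul', hc, star_natCast, ← add_smul, h2c,
    one_smul]

variable [DecidableEq ι] {ω : G → G → ℂ}

lemma IsCoRep.coConj_mul (hM : IsCoRep s M ω) (g h : G) (X : Matrix ι ι ℂ) :
    coConj s M (g * h) X = coConj s M g (coConj s M h X) := by
  have hω : star (ω g h) * ω g h = 1 := by
    rw [Complex.star_def, Complex.conj_mul', hM.omega_norm]; norm_num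
  calc coConj s M (g * h) X
      = (ω g h • M (g * h)) * mconj (s (g * h)) X * (ω g h • M (g * h))ᴴ := by
        simp only [coConj_apply, conjTranspose_smul, Matrix.smul_mul, Matrix.mul_smul, smul_smul,
          hω, one_smul]
    _ = (M g * mconj (s g) (M h)) * mconj (s g) (mconj (s h) X) * (M g * mconj (s g) (M h))ᴴ := by
        rw [hM.mul_eq, mconj_mconj, map_mul]
    _ = coConj s M g (coConj s M h X) := by
        simp only [coConj_apply, mconj_mul, mconj_conjTranspose, conjTranspose_mul, mul_assoc]

lemma IsCoRep.coConj_sum_coConj [Fintype G] (hM : IsCoRep s M ω) (g : G) (X : Matrix ι ι ℂ) :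
    coConj s M g (∑ h, coConj s M h X) = ∑ h, coConj s M h X := by
  simp_rw [map_sum, ← hM.coConj_mul]
  exact Fintype.sum_equiv (Equiv.mulLeft g) _ _ fun _ => rfl

lemma IsUnitaryCoRep.coConj_eq_self_iff (hM : IsUnitaryCoRep s M ω) (g : G) (X : Matrix ι ι ℂ) :
    coConj s M g X = X ↔ M g * mconj (s g) X = X * M g := by
  rw [coConj_apply]
  constructor
  · intro h
    calc M g * mconj (s g) X = M g * mconj (s g) X * (M g)ᴴ * M g := by
          rw [mul_assoc _ (M g)ᴴ, hM.conjTranspose_mul_self, mul_one]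
      _ = X * M g := by rw [h]
  · intro h
    rw [h, mul_assoc, hM.mul_conjTranspose_self, mul_one]

end CoConj

section Euclidean

variable {ι : Type*}

variable (ι) in
abbrev ofLpSubmodule : Submodule ℂ (EuclideanSpace ℂ ι) ≃o Submodule ℂ (ι → ℂ) :=
  Submodule.orderIsoMapComap (WithLp.linearEquiv 2 ℂ (ι → ℂ))

lemma mem_ofLpSubmodule {K : Submodule ℂ (EuclideanSpace ℂ ι)} {v : ι → ℂ} :
    v ∈ ofLpSubmodule ι K ↔ WithLp.toLp 2 v ∈ K :=
  Submodule.mem_map_equiv K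

variable [Fintype ι] [DecidableEq ι]

lemma eigSpace_eq_ofLpSubmodule_eigenspace (Q : Matrix ι ι ℂ) (μ : ℂ) :
    eigSpace Q μ = ofLpSubmodule ι (Module.End.eigenspace (toEuclideanLin Q) μ) := by
  ext v
  rw [mem_ofLpSubmodule, Module.End.mem_eigenspace_iff, toLpLin_toLp, toLin'_apply]
  exact (WithLp.toLp_injective 2).eq_iff.symm

lemma mulVec_toEuclideanLin_symm (T : EuclideanSpace ℂ ι →ₗ[ℂ] EuclideanSpace ℂ ι) (v : ι → ℂ) :
    toEuclideanLin.symm T *ᵥ v = WithLp.ofLp (T (WithLp.toLp 2 v)) := by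
  conv_rhs => rw [← toEuclideanLin.apply_symm_apply T]
  rfl

namespace Matrix.IsHermitian

variable {Q : Matrix ι ι ℂ} (hQ : Q.IsHermitian)
include hQ

lemma star_eq_of_mulVec_eq_smul {μ : ℂ} {v : ι → ℂ} (hv : Q *ᵥ v = μ • v) (hv0 : v ≠ 0) :
    star μ = μ := by
  have hmem : WithLp.toLp 2 v ∈ Module.End.eigenspace (toEuclideanLin Q) μ := by
    rw [← mem_ofLpSubmodule, ← eigSpace_eq_ofLpSubmodule_eigenspace]
    exact hv
  exact (isSymmetric_toEuclideanLin_iff.mpr hQ).conj_eigenvalue_eq_self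
    (Module.End.hasEigenvalue_of_hasEigenvector ⟨hmem, by simpa using hv0⟩)

lemma star_dotProduct_eq_zero_of_mem_eigSpace {μ ν : ℂ} (hne : μ ≠ ν) {v w : ι → ℂ}
    (hv : v ∈ eigSpace Q μ) (hw : w ∈ eigSpace Q ν) : star v ⬝ᵥ w = 0 := by
  rw [eigSpace_eq_ofLpSubmodule_eigenspace, mem_ofLpSubmodule] at hv hw
  rw [dotProduct_comm, ← EuclideanSpace.inner_toLp_toLp]
  exact ((isSymmetric_toEuclideanLin_iff.mpr hQ).orthogonalFamily_eigenspaces.isOrtho hne).inner_eq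
    hv hw

lemma iSup_eigSpace_eq_top : ⨆ μ, eigSpace Q μ = ⊤ := by
  simp_rw [eigSpace_eq_ofLpSubmodule_eigenspace, ← OrderIso.map_iSup,
    Submodule.orthogonal_eq_bot_iff.mp
      (isSymmetric_toEuclideanLin_iff.mpr hQ).orthogonalComplement_iSup_eigenspaces_eq_bot,
    OrderIso.map_top]

lemma mulVec_rho_eq_smul {G : Type*} [Group G] {s : G →* ℤˣ} {M : G → Matrix ι ι ℂ} {g : G}
    (hcomm : M g * mconj (s g) Q = Q * M g) {μ : ℂ} {v : ι → ℂ} (hv : Q *ᵥ v = μ • v) :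
    Q *ᵥ rho s M g v = μ • rho s M g v := by
  rcases eq_or_ne v 0 with rfl | hv0
  · simp [rho, vconj]
  rw [(mul_mconj_eq_mul_iff_mulVec_rho g Q).mp hcomm, hv,
    rho_smul_of_star_eq g (hQ.star_eq_of_mulVec_eq_smul hv hv0)]

end Matrix.IsHermitian

end Euclidean

section InnerProductSpace

variable {𝕜 E : Type*} [RCLike 𝕜] [NormedAddCommGroup E] [InnerProductSpace 𝕜 E]

lemma Submodule.starProjection_comm_of_mapsTo (K : Submodule 𝕜 E) [K.HasOrthogonalProjection]
    (f : E →+ E) (hK : ∀ x ∈ K, f x ∈ K) (hKo : ∀ x ∈ Kᗮ, f x ∈ Kᗮ) (x : E) :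
    K.starProjection (f x) = f (K.starProjection x) := by
  conv_lhs => rw [← K.starProjection_add_starProjection_orthogonal x]
  rw [map_add, map_add, K.starProjection_eq_self_iff.mpr (hK _ (K.starProjection_apply_mem x)),
    K.starProjection_apply_eq_zero_iff.mpr (hKo _ (Kᗮ.starProjection_apply_mem x)), add_zero]

variable [FiniteDimensional 𝕜 E]

lemma Submodule.exists_finset_isOrtho_minimal (P : Submodule 𝕜 E → Prop)
    (hinf : ∀ K L, P K → P L → P (K ⊓ L)) (horth : ∀ K, P K → P Kᗮ) (K : Submodule 𝕜 E)
    (hK : P K) :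
    ∃ S : Finset (Submodule 𝕜 E), (∀ W ∈ S, Minimal (fun V => P V ∧ V ≠ ⊥) W) ∧
      (S : Set (Submodule 𝕜 E)).Pairwise IsOrtho ∧ sSup (S : Set (Submodule 𝕜 E)) = K := by
  classical
  induction K using WellFoundedLT.induction with
  | _ K ih =>
  rcases eq_or_ne K ⊥ with rfl | hK0
  · exact ⟨∅, by simp, by simp, by simp⟩
  obtain ⟨U, hUK, hU⟩ := exists_minimal_le_of_wellFoundedLT (fun V => P V ∧ V ≠ ⊥) K ⟨hK, hK0⟩
  have hlt : Uᗮ ⊓ K < K := by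
    refine inf_le_right.lt_of_ne fun h => hU.prop.2 ?_
    exact U.orthogonal_disjoint.eq_bot_of_le (hUK.trans (inf_eq_right.mp h))
  obtain ⟨S, hmin, hortho, hsup⟩ := ih _ hlt (hinf _ _ (horth U hU.prop.1) hK)
  have hUS : ∀ W ∈ S, W ≤ Uᗮ := fun W hW => (le_sSup hW).trans (hsup ▸ inf_le_left)
  refine ⟨insert U S, ?_, ?_, ?_⟩
  · simpa using ⟨hU, hmin⟩
  · rw [Finset.coe_insert]
    exact hortho.insert fun W hW _ =>
      ⟨(Submodule.isOrtho_iff_le.mpr (hUS W hW)).symm, isOrtho_iff_le.mpr (hUS W hW)⟩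
  · rw [Finset.coe_insert, sSup_insert, hsup, sup_orthogonal_inf_of_hasOrthogonalProjection hUK]

namespace OrthogonalFamily

variable {κ : Type*} [Fintype κ] {W : κ → Submodule 𝕜 E}
  (hW : OrthogonalFamily 𝕜 (fun i => W i) fun i => (W i).subtypeₗᵢ) (c : κ → 𝕜)
include hW

lemma starProjection_sum_smul_starProjection (j : κ) (x : E) :
    (W j).starProjection ((∑ i, c i • ((W i).starProjection : E →ₗ[𝕜] E)) x) =
      c j • (W j).starProjection x := by
  rw [LinearMap.sum_apply, map_sum, Finset.sum_eq_single j]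
  · simp [(W j).starProjection_eq_self_iff.mpr ((W j).starProjection_apply_mem x)]
  · intro i _ hij
    simp [(W j).starProjection_apply_eq_zero_iff.mpr
      (Submodule.isOrtho_iff_le.mp (hW.isOrtho hij) ((W i).starProjection_apply_mem x))]
  · simp

lemma starProjection_eq_zero_of_mem_eigenspace {μ : 𝕜} {x : E}
    (hx : x ∈ Module.End.eigenspace (∑ i, c i • ((W i).starProjection : E →ₗ[𝕜] E)) μ) {j : κ}
    (hj : c j ≠ μ) : (W j).starProjection x = 0 := by
  have h := congrArg (W j).starProjection (Module.End.mem_eigenspace_iff.mp hx)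
  rw [hW.starProjection_sum_smul_starProjection, map_smul, ← sub_eq_zero, ← sub_smul] at h
  exact (smul_eq_zero.mp h).resolve_left (sub_ne_zero.mpr hj)

variable (htop : iSup W = ⊤)
include htop

lemma eigenspace_sum_smul_starProjection_self (hc : Function.Injective c) (i : κ) :
    Module.End.eigenspace (∑ i, c i • ((W i).starProjection : E →ₗ[𝕜] E)) (c i) = W i := by
  ext x
  constructor
  · intro hx
    have hsum := hW.sum_projection_of_mem_iSup x (htop ▸ Submodule.mem_top)
    rw [Finset.sum_eq_single i (fun j _ hji =>
      hW.starProjection_eq_zero_of_mem_eigenspace c hx (hc.ne hji)) (by simp)] at hsum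
    exact hsum ▸ (W i).starProjection_apply_mem x
  · intro hx
    rw [Module.End.mem_eigenspace_iff, LinearMap.sum_apply, Finset.sum_eq_single i]
    · simp [(W i).starProjection_eq_self_iff.mpr hx]
    · intro j _ hji
      simp [(W j).starProjection_apply_eq_zero_iff.mpr
        (Submodule.isOrtho_iff_le.mp (hW.isOrtho hji.symm) hx)]
    · simp

lemma eigenspace_sum_smul_starProjection_eq_bot {μ : 𝕜} (hμ : ∀ i, c i ≠ μ) :
    Module.End.eigenspace (∑ i, c i • ((W i).starProjection : E →ₗ[𝕜] E)) μ = ⊥ := by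
  refine eq_bot_iff.mpr fun x hx => ?_
  rw [Submodule.mem_bot, ← hW.sum_projection_of_mem_iSup x (htop ▸ Submodule.mem_top)]
  exact Finset.sum_eq_zero fun i _ => hW.starProjection_eq_zero_of_mem_eigenspace c hx (hμ i)

end OrthogonalFamily

end InnerProductSpace

section Decomposition

variable {G : Type*} [Group G] {ι : Type*} [Fintype ι] [DecidableEq ι] {s : G →* ℤˣ}
  {M : G → Matrix ι ι ℂ} {ω : G → G → ℂ}

lemma IsUnitaryCoRep.invariantSub_ofLpSubmodule_orthogonal (hM : IsUnitaryCoRep s M ω)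
    {K : Submodule ℂ (EuclideanSpace ℂ ι)} (hK : InvariantSub s M (ofLpSubmodule ι K)) :
    InvariantSub s M (ofLpSubmodule ι Kᗮ) := by
  intro g v hv
  rw [mem_ofLpSubmodule, Submodule.mem_orthogonal] at hv ⊢
  intro y hy
  obtain ⟨w, hw, hwy⟩ := hM.exists_rho_eq hK g (mem_ofLpSubmodule.mpr hy : WithLp.ofLp y ∈ _)
  rw [show y = WithLp.toLp 2 y.ofLp from rfl, ← hwy, EuclideanSpace.inner_toLp_toLp,
    dotProduct_comm]
  refine hM.star_rho_dotProduct_rho_eq_zero g ?_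
  rw [dotProduct_comm, ← EuclideanSpace.inner_toLp_toLp]
  exact hv _ (mem_ofLpSubmodule.mp hw)

lemma IsUnitaryCoRep.exists_finset_isOrtho_irreducible (hM : IsUnitaryCoRep s M ω) :
    ∃ S : Finset (Submodule ℂ (EuclideanSpace ℂ ι)),
      (∀ W ∈ S, Minimal (fun V => InvariantSub s M (ofLpSubmodule ι V) ∧ V ≠ ⊥) W) ∧
      (S : Set (Submodule ℂ (EuclideanSpace ℂ ι))).Pairwise Submodule.IsOrtho ∧
      sSup (S : Set (Submodule ℂ (EuclideanSpace ℂ ι))) = ⊤ := by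
  refine Submodule.exists_finset_isOrtho_minimal (fun K => InvariantSub s M (ofLpSubmodule ι K))
    (fun K L hK hL g v hv => ?_) (fun _ => hM.invariantSub_ofLpSubmodule_orthogonal) ⊤
    (fun g v _ => ?_)
  · rw [OrderIso.map_inf] at hv ⊢
    exact ⟨hK g v hv.1, hL g v hv.2⟩
  · rw [OrderIso.map_top]
    exact Submodule.mem_top

lemma IsUnitaryCoRep.coConj_starProjection (hM : IsUnitaryCoRep s M ω)
    {K : Submodule ℂ (EuclideanSpace ℂ ι)} (hK : InvariantSub s M (ofLpSubmodule ι K)) (g : G) :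
    coConj s M g (toEuclideanLin.symm K.starProjection) = toEuclideanLin.symm K.starProjection := by
  let f : EuclideanSpace ℂ ι →+ EuclideanSpace ℂ ι :=
    { toFun x := WithLp.toLp 2 (rho s M g x.ofLp)
      map_zero' := by simp [rho, vconj]
      map_add' x y := by simp [rho_add] }
  rw [hM.coConj_eq_self_iff, mul_mconj_eq_mul_iff_mulVec_rho]
  intro v
  simp only [mulVec_toEuclideanLin_symm]
  exact congrArg WithLp.ofLp (K.starProjection_comm_of_mapsTo f
    (fun x hx => mem_ofLpSubmodule.mp (hK g _ (mem_ofLpSubmodule.mpr hx)))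
    (fun x hx => mem_ofLpSubmodule.mp
      (hM.invariantSub_ofLpSubmodule_orthogonal hK g _ (mem_ofLpSubmodule.mpr hx)))
    (WithLp.toLp 2 v))

variable {κ : Type*} [Fintype κ]

def weightedProjection (W : κ → Submodule ℂ (EuclideanSpace ℂ ι)) (c : κ → ℝ) : Matrix ι ι ℂ :=
  toEuclideanLin.symm (∑ i, (c i : ℂ) • ((W i).starProjection : EuclideanSpace ℂ ι →ₗ[ℂ] _))

lemma isHermitian_weightedProjection (W : κ → Submodule ℂ (EuclideanSpace ℂ ι)) (c : κ → ℝ) :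
    (weightedProjection W c).IsHermitian := by
  rw [← isSymmetric_toEuclideanLin_iff, weightedProjection, LinearEquiv.apply_symm_apply]
  exact LinearMap.isSymmetric_sum _ fun i _ =>
    (W i).starProjection_isSymmetric.smul (Complex.conj_ofReal _)

lemma IsUnitaryCoRep.coConj_weightedProjection (hM : IsUnitaryCoRep s M ω)
    {W : κ → Submodule ℂ (EuclideanSpace ℂ ι)} (hW : ∀ i, InvariantSub s M (ofLpSubmodule ι (W i)))
    (c : κ → ℝ) (g : G) : coConj s M g (weightedProjection W c) = weightedProjection W c := by
  simp only [weightedProjection, map_sum, map_smul]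
  exact Finset.sum_congr rfl fun i _ => by
    rw [coConj_smul_of_star_eq g (Complex.conj_ofReal _), hM.coConj_starProjection (hW i)]

section Eigenspaces

variable {W : κ → Submodule ℂ (EuclideanSpace ℂ ι)}
  (hW : OrthogonalFamily ℂ (fun i => W i) fun i => (W i).subtypeₗᵢ) (htop : iSup W = ⊤)
  {c : κ → ℝ}
include hW htop

lemma eigSpace_weightedProjection_self (hc : Function.Injective c) (i : κ) :
    eigSpace (weightedProjection W c) (c i) = ofLpSubmodule ι (W i) := by
  rw [eigSpace_eq_ofLpSubmodule_eigenspace, weightedProjection, LinearEquiv.apply_symm_apply,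
    hW.eigenspace_sum_smul_starProjection_self (fun i => (c i : ℂ)) htop
      (Complex.ofReal_injective.comp hc)]

lemma eigSpace_weightedProjection_eq_bot {μ : ℂ} (hμ : ∀ i, (c i : ℂ) ≠ μ) :
    eigSpace (weightedProjection W c) μ = ⊥ := by
  rw [eigSpace_eq_ofLpSubmodule_eigenspace, weightedProjection, LinearEquiv.apply_symm_apply,
    hW.eigenspace_sum_smul_starProjection_eq_bot _ htop hμ, OrderIso.map_bot]

lemma eq_bot_or_eq_of_le_eigSpace_weightedProjection (hc : Function.Injective c)
    (hmin : ∀ i, Minimal (fun V => InvariantSub s M (ofLpSubmodule ι V) ∧ V ≠ ⊥) (W i))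
    (μ : ℂ) (V : Submodule ℂ (ι → ℂ)) (hV : V ≤ eigSpace (weightedProjection W c) μ)
    (hVinv : InvariantSub s M V) : V = ⊥ ∨ V = eigSpace (weightedProjection W c) μ := by
  by_cases hμ : ∃ i, (c i : ℂ) = μ
  · obtain ⟨i, rfl⟩ := hμ
    obtain ⟨K, rfl⟩ := (ofLpSubmodule ι).surjective V
    rw [eigSpace_weightedProjection_self hW htop hc, OrderIso.le_iff_le] at hV
    rw [eigSpace_weightedProjection_self hW htop hc]
    rcases eq_or_ne K ⊥ with rfl | hK0
    · exact Or.inl (OrderIso.map_bot _)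
    · exact Or.inr (congrArg _ ((hmin i).eq_of_le ⟨hVinv, hK0⟩ hV))
  · rw [eigSpace_weightedProjection_eq_bot hW htop (not_exists.mp hμ)] at hV
    exact Or.inl (le_bot_iff.mp hV)

end Eigenspaces

lemma IsUnitaryCoRep.exists_isHermitian_irreducible_eigSpace (hM : IsUnitaryCoRep s M ω) :
    ∃ Q : Matrix ι ι ℂ, Q.IsHermitian ∧ (∀ g, coConj s M g Q = Q) ∧
      ∀ μ V, V ≤ eigSpace Q μ → InvariantSub s M V → V = ⊥ ∨ V = eigSpace Q μ := by
  obtain ⟨S, hmin, hortho, hsup⟩ := hM.exists_finset_isOrtho_irreducible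
  let W : S → Submodule ℂ (EuclideanSpace ℂ ι) := Subtype.val
  let c : S → ℝ := fun i => (S.equivFin i : ℝ)
  have hW : OrthogonalFamily ℂ (fun i => W i) fun i => (W i).subtypeₗᵢ :=
    orthogonalFamily_iff_pairwise.mpr ((Finset.pairwise_subtype_iff_pairwise_finset _).mpr hortho)
  have htop : iSup W = ⊤ := by rw [← hsup, sSup_eq_iSup']; rfl
  have hc : Function.Injective c := fun i j h =>
    S.equivFin.injective (Fin.ext (Nat.cast_injective h))
  exact ⟨weightedProjection W c, isHermitian_weightedProjection W c,
    hM.coConj_weightedProjection (fun i : S => (hmin i.1 i.2).prop.1) c,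
    eq_bot_or_eq_of_le_eigSpace_weightedProjection hW htop hc (fun i : S => hmin i.1 i.2)⟩

end Decomposition

theorem averaged_commutant_and_decomposition_general {G : Type*} [Group G] [Fintype G]
    (s : G →* ℤˣ)
    {n : ℕ}
    (M : G → Matrix (Fin n) (Fin n) ℂ) (ω : G → G → ℂ)
    (hM : IsUnitaryCoRep s M ω) :
    (∀ Q0 qr Qr : Matrix (Fin n) (Fin n) ℂ,
      qr = ∑ g : G, M g * mconj (s g) Q0 * (M g)ᴴ →
      Qr = qr + qrᴴ →
      Qr.IsHermitian ∧
      (∀ g, M g * mconj (s g) Qr = Qr * M g) ∧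
      (∀ (lam : ℂ) (g : G) (v : Fin n → ℂ), Qr.mulVec v = lam • v →
        Qr.mulVec (rho s M g v) = lam • rho s M g v)) ∧
    (∃ Q0 : Matrix (Fin n) (Fin n) ℂ, ∀ qr Qr : Matrix (Fin n) (Fin n) ℂ,
      qr = ∑ g : G, M g * mconj (s g) Q0 * (M g)ᴴ →
      Qr = qr + qrᴴ →
      (∀ lam mu : ℂ, lam ≠ mu → ∀ v ∈ eigSpace Qr lam, ∀ w ∈ eigSpace Qr mu,
        dotProduct (star v) w = 0) ∧
      (⨆ lam : ℂ, eigSpace Qr lam) = ⊤ ∧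
      (∀ lam : ℂ, InvariantSub s M (eigSpace Qr lam)) ∧
      (∀ lam : ℂ, ∀ W : Submodule ℂ (Fin n → ℂ), W ≤ eigSpace Qr lam →
        InvariantSub s M W → W = ⊥ ∨ W = eigSpace Qr lam)) := by
  refine ⟨fun Q0 qr Qr hqr hQr => ?_, ?_⟩
  · have hqr' : qr = ∑ h, coConj s M h Q0 := hqr
    have hcomm : ∀ g, M g * mconj (s g) Qr = Qr * M g := fun g => by
      rw [← hM.coConj_eq_self_iff, hQr, hqr', map_add, coConj_conjTranspose,
        hM.coConj_sum_coConj]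
    have hherm : Qr.IsHermitian := hQr ▸ isHermitian_add_transpose_self qr
    exact ⟨hherm, hcomm, fun μ g v hv => hherm.mulVec_rho_eq_smul (hcomm g) hv⟩
  · obtain ⟨Q, hQ, hfix, hirr⟩ := hM.exists_isHermitian_irreducible_eigSpace
    refine ⟨((2 * Fintype.card G : ℕ) : ℂ)⁻¹ • Q, fun qr Qr hqr hQr => ?_⟩
    obtain rfl : Qr = Q := hQr.trans (hqr ▸ sum_coConj_smul_add_conjTranspose hQ hfix)
    have hcomm g := (hM.coConj_eq_self_iff g Qr).mp (hfix g)
    exact ⟨fun μ ν hne v hv w hw => hQ.star_dotProduct_eq_zero_of_mem_eigSpace hne hv hw,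
      hQ.iSup_eigSpace_eq_top, fun μ g v hv => hQ.mulVec_rho_eq_smul (hcomm g) hv, hirr⟩

/-- for any `Q₀`, the matrix `Q_r = q_r + q_r†` with
`q_r = Σ_g M(g)·Q₀^{σ(g)}·M(g)†` is Hermitian, commutes with all the operators `ρ(g)`,
and its eigenspaces are invariant; moreover some choice of `Q₀` yields an orthogonal
decomposition of `ℂⁿ` into irreducible invariant subspaces. -/
theorem averaged_commutant_and_decomposition {G : Type*} [Group G] [Fintype G]
    (s : G →* ℤˣ) (hs : Function.Surjective s)
    {n : ℕ}
    (M : G → Matrix (Fin n) (Fin n) ℂ) (ω : G → G → ℂ)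
    (hM : IsUnitaryCoRep s M ω) :
    (∀ Q0 qr Qr : Matrix (Fin n) (Fin n) ℂ,
      qr = ∑ g : G, M g * mconj (s g) Q0 * (M g)ᴴ →
      Qr = qr + qrᴴ →
      Qr.IsHermitian ∧
      (∀ g, M g * mconj (s g) Qr = Qr * M g) ∧
      (∀ (lam : ℂ) (g : G) (v : Fin n → ℂ), Qr.mulVec v = lam • v →
        Qr.mulVec (rho s M g v) = lam • rho s M g v)) ∧
    (∃ Q0 : Matrix (Fin n) (Fin n) ℂ, ∀ qr Qr : Matrix (Fin n) (Fin n) ℂ,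
      qr = ∑ g : G, M g * mconj (s g) Q0 * (M g)ᴴ →
      Qr = qr + qrᴴ →
      (∀ lam mu : ℂ, lam ≠ mu → ∀ v ∈ eigSpace Qr lam, ∀ w ∈ eigSpace Qr mu,
        dotProduct (star v) w = 0) ∧
      (⨆ lam : ℂ, eigSpace Qr lam) = ⊤ ∧
      (∀ lam : ℂ, InvariantSub s M (eigSpace Qr lam)) ∧
      (∀ lam : ℂ, ∀ W : Submodule ℂ (Fin n → ℂ), W ≤ eigSpace Qr lam →
        InvariantSub s M W → W = ⊥ ∨ W = eigSpace Qr lam)) :=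
  averaged_commutant_and_decomposition_general s M ω hM

end
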